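/- arXiv:1702.08108 — 2 statements merged into one kernel-verified Lean document; each statement's English description precedes it below -/
import Mathlib

section
/- For every integer a, the multiplication operator t^{2a+1} = w_{2a+1,0} on ℂ[t,t⁻¹] belongs to the Lie subalgebra L of the ℂ-endomorphism algebra of ℂ[t,t⁻¹] generated (under commutator) by the four operators t, D³, t²(D+1) and t⁻²(D−1). (This is the generation of the twisted Heisenberg part of W⁻ by the generating set of Lemma 2.4, realized on operators.) -/
open Polynomial LaurentPolynomial

attribute [local instance 100] LieRing.ofAssociativeRing

/-!
Bracketing with `t²(D+1)` and with `t⁻²(D−1)` sends `tᵏ` to `k tᵏ⁺²` and to `k tᵏ⁻²`, because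
`[tʲD, tᵏ] = k tʲ⁺ᵏ` while multiplication operators commute. Odd `k` is never zero, so starting
from `t` these two brackets reach every odd power of `t`.
-/

theorem LaurentPolynomial.linearMap_ext_T {R M : Type*} [CommSemiring R] [AddCommMonoid M]
    [Module R M] {f g : R[T;T⁻¹] →ₗ[R] M} (h : ∀ m : ℤ, f (T m) = g (T m)) : f = g :=
  (AddMonoidAlgebra.basis ℤ R).ext h

theorem LieSubalgebra.mem_of_lie_eq_smul {K L : Type*} [Field K] [LieRing L] [LieAlgebra K L]
    (S : LieSubalgebra K L) {x y z : L} {c : K} (hc : c ≠ 0) (hx : x ∈ S) (hy : y ∈ S)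
    (h : ⁅x, y⁆ = c • z) : z ∈ S :=
  (S.toSubmodule.smul_mem_iff hc).mp (h ▸ S.lie_mem hx hy)

section EulerOperators

variable {R : Type*} [CommRing R] {w : ℤ → ℕ → Module.End R R[T;T⁻¹]}
  (hw : ∀ (k : ℤ) (l : ℕ) (m : ℤ), w k l (T m) = ((m : R) ^ l) • (T (m + k) : R[T;T⁻¹]))
include hw

theorem lie_w_zero_w_zero (j k : ℤ) : ⁅w j 0, w k 0⁆ = 0 := by
  refine LaurentPolynomial.linearMap_ext_T fun m => ?_
  simp only [Ring.lie_def, LinearMap.sub_apply, Module.End.mul_apply, hw, pow_zero, one_smul,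
    LinearMap.zero_apply, add_right_comm m j k, sub_self]

theorem lie_w_one_w_zero (j k : ℤ) : ⁅w j 1, w k 0⁆ = (k : R) • w (j + k) 0 := by
  refine LaurentPolynomial.linearMap_ext_T fun m => ?_
  simp only [Ring.lie_def, LinearMap.sub_apply, Module.End.mul_apply, LinearMap.smul_apply,
    map_smul, hw, pow_zero, pow_one, one_smul]
  rw [← add_assoc m j k, add_right_comm m j k]
  push_cast
  module

theorem lie_w_one_add_w_zero_w_zero (j k : ℤ) :
    ⁅w j 1 + w j 0, w k 0⁆ = (k : R) • w (j + k) 0 := by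
  rw [add_lie, lie_w_one_w_zero hw, lie_w_zero_w_zero hw, add_zero]

theorem lie_w_one_sub_w_zero_w_zero (j k : ℤ) :
    ⁅w j 1 - w j 0, w k 0⁆ = (k : R) • w (j + k) 0 := by
  rw [sub_lie, lie_w_one_w_zero hw, lie_w_zero_w_zero hw, sub_zero]

end EulerOperators

/-- for every integer `a`, the multiplication operator
`t^{2a+1} = w_{2a+1,0}` on `ℂ[t,t⁻¹]` belongs to the Lie subalgebra generated by the
four operators `t`, `D³`, `t²(D+1)` and `t⁻²(D−1)` (the generating set of Lemma 2.4). -/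
theorem w_odd_mem_lieSpan
    (w : ℤ → ℕ → Module.End ℂ (LaurentPolynomial ℂ))
    (hw : ∀ (k : ℤ) (l : ℕ) (m : ℤ),
      w k l (T m) = ((m : ℂ) ^ l) • (T (m + k) : LaurentPolynomial ℂ))
    (a : ℤ) :
    w (2 * a + 1) 0 ∈
      LieSubalgebra.lieSpan ℂ (Module.End ℂ (LaurentPolynomial ℂ))
        {w 1 0, w 0 3, w 2 1 + w 2 0, w (-2) 1 - w (-2) 0} := by
  set S := LieSubalgebra.lieSpan ℂ (Module.End ℂ (LaurentPolynomial ℂ))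
    {w 1 0, w 0 3, w 2 1 + w 2 0, w (-2) 1 - w (-2) 0}
  have shift {X : Module.End ℂ ℂ[T;T⁻¹]} {j : ℤ} (hX : X ∈ S)
      (hlie : ∀ k : ℤ, ⁅X, w k 0⁆ = (k : ℂ) • w (j + k) 0) {b : ℤ} (hb : w (2 * b + 1) 0 ∈ S) :
      w (j + (2 * b + 1)) 0 ∈ S :=
    S.mem_of_lie_eq_smul (Int.cast_ne_zero.mpr (by omega)) hX hb (hlie _)
  have raise : w 2 1 + w 2 0 ∈ S := LieSubalgebra.subset_lieSpan (by simp)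
  have lower : w (-2) 1 - w (-2) 0 ∈ S := LieSubalgebra.subset_lieSpan (by simp)
  induction a using Int.induction_on with
  | zero => exact LieSubalgebra.subset_lieSpan (by simp)
  | succ n ih =>
    convert shift raise (lie_w_one_add_w_zero_w_zero hw 2) ih using 2
    ring
  | pred n ih =>
    convert shift lower (lie_w_one_sub_w_zero_w_zero hw (-2)) ih using 2
    ring
end

section
/- For every integer a and every natural number b, there exists a polynomial p ∈ ℂ[X] of degree strictly less than 2b such that the operator t^{2a+1}·(D^{2b} + p(D)) on ℂ[t,t⁻¹] belongs to the Lie subalgebra L of the ℂ-endomorphism algebra of ℂ[t,t⁻¹] generated (under commutator) by the four operators t, D³, t²(D+1) and t⁻²(D−1). (This is the generation, up to lower-order terms, of the elements w_{2a+1,2b} of W⁻ in the proof of Lemma 2.4.) -/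
/-!
Commuting `t²(D+1)` or `t⁻²(D-1)` with `tᵏ` gives `k·tᵏ⁺²` or `k·tᵏ⁻²`, so starting from `t` every
odd power `t^(2a+1)` lies in the Lie algebra. Commuting `D³` with `tᵏ f(D)` gives
`tᵏ ((D+k)³ - D³) f(D)`, and for `k ≠ 0` the factor `(X+k)³ - X³` has degree exactly two; so from
`t^(2a+1)` one reaches polynomials `f` of every even degree, which are then made monic by scaling.
-/

open Polynomial LaurentPolynomial

attribute [local instance 100] LieRing.ofAssociativeRing

theorem LaurentPolynomial.linearMap_ext {R M : Type*} [CommSemiring R] [AddCommMonoid M]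
    [Module R M] {f g : R[T;T⁻¹] →ₗ[R] M} (h : ∀ m, f (T m) = g (T m)) : f = g :=
  (AddMonoidAlgebra.basis ℤ R).ext fun m => by simpa [AddMonoidAlgebra.basis_apply] using h m

theorem Polynomial.degree_X_add_C_pow_three_sub {R : Type*} [CommRing R] {c : R}
    (hc : 3 * c ≠ 0) : ((X + C c) ^ 3 - X ^ 3).degree = 2 := by
  have : (X + C c) ^ 3 - X ^ 3 = C (3 * c) * X ^ 2 + C (3 * c ^ 2) * X + C (c ^ 3) := by
    simp only [map_mul, map_pow, map_ofNat]; ring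
  rw [this]
  compute_degree!

theorem Polynomial.exists_degree_lt_X_pow_add_eq_C_mul {K : Type*} [Field K] {f : K[X]} {n : ℕ}
    (hf : f.degree = n) :
    ∃ p : K[X], p.degree < n ∧ X ^ n + p = C f.leadingCoeff⁻¹ * f := by
  have hlc : f.leadingCoeff ≠ 0 := leadingCoeff_ne_zero.mpr fun h => by simp [h] at hf
  have hmonic : (C f.leadingCoeff⁻¹ * f).Monic :=
    monic_C_mul_of_mul_leadingCoeff_eq_one (inv_mul_cancel₀ hlc)
  have hdeg : (C f.leadingCoeff⁻¹ * f).degree = n := by rw [degree_C_mul (inv_ne_zero hlc), hf]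
  refine ⟨C f.leadingCoeff⁻¹ * f - X ^ n, ?_, add_sub_cancel _ _⟩
  simpa [hdeg] using degree_sub_lt_left (hdeg.trans (degree_X_pow n).symm) hmonic.ne_zero
    (by rw [hmonic.leadingCoeff, (monic_X_pow n).leadingCoeff])

/-- `W k f` is the operator `tᵏ f(D)` on `R[T;T⁻¹]`, where `D = t d/dt`. -/
def IsWeylFamily {R : Type*} [CommRing R] (W : ℤ → R[X] → Module.End R R[T;T⁻¹]) : Prop :=
  ∀ (k : ℤ) (f : R[X]) (m : ℤ), W k f (T m) = f.eval (m : R) • (T (m + k) : R[T;T⁻¹])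

namespace IsWeylFamily

section CommRing

variable {R : Type*} [CommRing R] {W : ℤ → R[X] → Module.End R R[T;T⁻¹]}
  {L : LieSubalgebra R (Module.End R R[T;T⁻¹])}

theorem add (hW : IsWeylFamily W) (k : ℤ) (f g : R[X]) : W k (f + g) = W k f + W k g :=
  LaurentPolynomial.linearMap_ext fun m => by simp [hW k, add_smul]

theorem sub (hW : IsWeylFamily W) (k : ℤ) (f g : R[X]) : W k (f - g) = W k f - W k g :=
  LaurentPolynomial.linearMap_ext fun m => by simp [hW k, sub_smul]

theorem C_mul (hW : IsWeylFamily W) (k : ℤ) (c : R) (f : R[X]) :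
    W k (Polynomial.C c * f) = c • W k f :=
  LaurentPolynomial.linearMap_ext fun m => by simp [hW k, mul_smul]

theorem lie (hW : IsWeylFamily W) (k l : ℤ) (f g : R[X]) :
    ⁅W k f, W l g⁆ = W (k + l)
      (f.comp (X + Polynomial.C (l : R)) * g - g.comp (X + Polynomial.C (k : R)) * f) := by
  refine LaurentPolynomial.linearMap_ext fun m => ?_
  simp only [LieRing.of_associative_ring_bracket, LinearMap.sub_apply, Module.End.mul_apply,
    hW _ _ m, hW _ _ (m + l), hW _ _ (m + k), map_smul, smul_smul, eval_sub, eval_mul,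
    eval_comp, eval_add, eval_X, eval_C, sub_smul, add_right_comm m l k]
  push_cast
  rw [add_assoc, mul_comm (eval (m + l : R) f), mul_comm (eval (m + k : R) g)]

theorem mul_mem_of_lie_X_pow_three (hW : IsWeylFamily W) (h3 : W 0 (X ^ 3) ∈ L) {k : ℤ}
    {f : R[X]} (hf : W k f ∈ L) : W k (((X + Polynomial.C (k : R)) ^ 3 - X ^ 3) * f) ∈ L := by
  have hbracket : ⁅W 0 (X ^ 3), W k f⁆ = W k (((X + Polynomial.C (k : R)) ^ 3 - X ^ 3) * f) := by
    rw [hW.lie, zero_add]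
    congr 1
    simp only [X_pow_comp, Int.cast_zero, map_zero, add_zero, comp_X]
    ring
  exact hbracket ▸ L.lie_mem h3 hf

end CommRing

variable {R : Type*} [Field R] {W : ℤ → R[X] → Module.End R R[T;T⁻¹]}
  {L : LieSubalgebra R (Module.End R R[T;T⁻¹])}

theorem one_mem_add_of_X_add_C_mem (hW : IsWeylFamily W) {s k : ℤ} {d : R}
    (hs : W s (X + Polynomial.C d) ∈ L) (hk : W k 1 ∈ L) (hk0 : (k : R) ≠ 0) :
    W (k + s) 1 ∈ L := by
  have hbracket : ⁅W s (X + Polynomial.C d), W k 1⁆ = (k : R) • W (k + s) 1 := by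
    rw [hW.lie, add_comm s k, ← hW.C_mul]
    congr 1
    simp only [add_comp, X_comp, C_comp, one_comp]
    ring
  have := L.smul_mem (k : R)⁻¹ (hbracket ▸ L.lie_mem hs hk)
  rwa [smul_smul, inv_mul_cancel₀ hk0, one_smul] at this

variable [CharZero R]

theorem odd_one_mem (hW : IsWeylFamily W) {d e : R} (h1 : W 1 1 ∈ L)
    (hup : W 2 (X + Polynomial.C d) ∈ L) (hdown : W (-2) (X + Polynomial.C e) ∈ L) (a : ℤ) :
    W (2 * a + 1) 1 ∈ L := by
  induction a using Int.induction_on with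
  | zero => simpa using h1
  | succ i ih =>
    have := hW.one_mem_add_of_X_add_C_mem hup ih
      (by exact_mod_cast (by omega : 2 * (i : ℤ) + 1 ≠ 0))
    rwa [show 2 * (i : ℤ) + 1 + 2 = 2 * (i + 1) + 1 by ring] at this
  | pred i ih =>
    have := hW.one_mem_add_of_X_add_C_mem hdown ih
      (by exact_mod_cast (by omega : 2 * -(i : ℤ) + 1 ≠ 0))
    rwa [show 2 * -(i : ℤ) + 1 + -2 = 2 * (-i - 1) + 1 by ring] at this

theorem exists_degree_eq_two_mul_mem (hW : IsWeylFamily W) (h3 : W 0 (X ^ 3) ∈ L) {k : ℤ}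
    (hk0 : k ≠ 0) (hk : W k 1 ∈ L) (b : ℕ) : ∃ f : R[X], f.degree = (2 * b : ℕ) ∧ W k f ∈ L := by
  induction b with
  | zero => exact ⟨1, by simp, hk⟩
  | succ b ih =>
    obtain ⟨f, hf, hfL⟩ := ih
    refine ⟨_, ?_, hW.mul_mem_of_lie_X_pow_three h3 hfL⟩
    have hc : 3 * (k : R) ≠ 0 := mul_ne_zero three_ne_zero (Int.cast_ne_zero.mpr hk0)
    rw [degree_mul, degree_X_add_C_pow_three_sub hc, hf]
    norm_cast
    omega

end IsWeylFamily

/-- for every integer `a` and natural number `b`, there exists a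
polynomial `p ∈ ℂ[X]` of degree `< 2b` such that the operator
`t^{2a+1}·(D^{2b} + p(D))` (realized as `W(2a+1, X^{2b} + p)`) belongs to the Lie
subalgebra generated by `t`, `D³`, `t²(D+1)` and `t⁻²(D−1)`.  Here `W(k,f)` is
determined by `W(k,f)(tᵐ) = f(m)·tᵐ⁺ᵏ`, and `w_{k,ℓ} = W(k,Xˡ)`. -/
theorem w_odd_even_mem_lieSpan_up_to_lower_terms
    (W : ℤ → ℂ[X] → Module.End ℂ (LaurentPolynomial ℂ))
    (hW : ∀ (k : ℤ) (f : ℂ[X]) (m : ℤ),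
      W k f (T m) = f.eval (m : ℂ) • (T (m + k) : LaurentPolynomial ℂ))
    (a : ℤ) (b : ℕ) :
    ∃ p : ℂ[X], p.degree < ((2 * b : ℕ) : WithBot ℕ) ∧
      W (2 * a + 1) (Polynomial.X ^ (2 * b) + p) ∈
        LieSubalgebra.lieSpan ℂ (Module.End ℂ (LaurentPolynomial ℂ))
          {W 1 1, W 0 (Polynomial.X ^ 3),
            W 2 Polynomial.X + W 2 1, W (-2) Polynomial.X - W (-2) 1} := by
  have hW : IsWeylFamily W := hW
  set L := LieSubalgebra.lieSpan ℂ (Module.End ℂ (LaurentPolynomial ℂ))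
    {W 1 1, W 0 (X ^ 3), W 2 X + W 2 1, W (-2) X - W (-2) 1}
  have hup : W 2 (X + Polynomial.C 1) ∈ L := by
    rw [Polynomial.C_1, hW.add]
    exact LieSubalgebra.subset_lieSpan (by simp)
  have hdown : W (-2) (X + Polynomial.C (-1)) ∈ L := by
    rw [map_neg, Polynomial.C_1, ← sub_eq_add_neg, hW.sub]
    exact LieSubalgebra.subset_lieSpan (by simp)
  have hodd := hW.odd_one_mem (LieSubalgebra.subset_lieSpan (by simp)) hup hdown a
  obtain ⟨f, hf, hfL⟩ :=
    hW.exists_degree_eq_two_mul_mem (LieSubalgebra.subset_lieSpan (by simp)) (by omega) hodd b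
  obtain ⟨p, hp, hpf⟩ := exists_degree_lt_X_pow_add_eq_C_mul hf
  exact ⟨p, hp, by rw [hpf, hW.C_mul]; exact L.smul_mem _ hfL⟩
end
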